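/- For L > 0 and a rank-one orthogonal projection P on ℝ², the matrix T(z) = 1 + L z J P satisfies i(T(z)* J T(z) − J) ≥ 0 for all z ∈ ℂ⁺. -/

import Mathlib

open Matrix
open scoped ComplexOrder

noncomputable def Jmat : Matrix (Fin 2) (Fin 2) ℝ := !![0, -1; 1, 0]

def IsRankOneProjection (P : Matrix (Fin 2) (Fin 2) ℝ) : Prop :=
  ∃ v : Fin 2 → ℝ, (v 0) ^ 2 + (v 1) ^ 2 = 1 ∧ P = vecMulVec v v

theorem transfer_matrix_J_contraction (L : ℝ) (hL : 0 < L)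
    (P : Matrix (Fin 2) (Fin 2) ℝ) (hP : IsRankOneProjection P) (z : ℂ) (hz : 0 < z.im) :
    (Complex.I •
      (((1 : Matrix (Fin 2) (Fin 2) ℂ) + ((L : ℂ) * z) • ((Jmat * P).map Complex.ofReal))ᴴ *
          ((Jmat).map Complex.ofReal) *
          ((1 : Matrix (Fin 2) (Fin 2) ℂ) + ((L : ℂ) * z) • ((Jmat * P).map Complex.ofReal)) -
        (Jmat).map Complex.ofReal)).PosSemidef := by
  obtain ⟨v, hv, rfl⟩ := hP
  set w : Fin 2 → ℂ := fun i => (v i : ℂ) with hw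
  set Jc : Matrix (Fin 2) (Fin 2) ℂ := Jmat.map Complex.ofReal with hJc
  set Pc : Matrix (Fin 2) (Fin 2) ℂ := (vecMulVec v v).map Complex.ofReal with hPc
  have hPw : Pc = vecMulVec w w := by
    ext i j; simp [hPc, hw, vecMulVec_apply]
  have hJJ : Jc * Jc = -1 := by
    ext i j
    fin_cases i <;> fin_cases j <;>
      simp [hJc, Jmat, Matrix.mul_apply, Fin.sum_univ_two, Matrix.one_apply]
  have hJH : Jcᴴ = -Jc := by
    ext i j
    fin_cases i <;> fin_cases j <;> simp [hJc, Jmat]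
  have hPH : Pcᴴ = Pc := by
    ext i j
    simp [hPw, vecMulVec_apply, hw, mul_comm]
  have hPJP : Pc * Jc * Pc = 0 := by
    ext i j
    fin_cases i <;> fin_cases j <;>
      simp [hPw, hJc, Jmat, Matrix.mul_apply, Fin.sum_univ_two, vecMulVec_apply] <;> ring
  set a : ℂ := (L : ℂ) * z with ha
  have hmap : (Jmat * vecMulVec v v).map Complex.ofReal = Jc * Pc := by
    ext i j
    simp [hJc, hPc, Matrix.map_apply, Matrix.mul_apply, Fin.sum_univ_two]
  rw [hmap]
  have hexp : ((1 : Matrix (Fin 2) (Fin 2) ℂ) + a • (Jc * Pc))ᴴ * Jc *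
      ((1 : Matrix (Fin 2) (Fin 2) ℂ) + a • (Jc * Pc)) - Jc
      = ((starRingEnd ℂ) a - a) • Pc := by
    have hH : (a • (Jc * Pc))ᴴ = (starRingEnd ℂ) a • (-(Pc * Jc)) := by
      rw [Matrix.conjTranspose_smul, Matrix.conjTranspose_mul, hPH, hJH]
      simp [Matrix.mul_neg]
    rw [Matrix.conjTranspose_add, hH]
    simp only [Matrix.conjTranspose_one, Matrix.add_mul, Matrix.mul_add, Matrix.one_mul,
      Matrix.mul_one, Matrix.smul_mul, Matrix.mul_smul, smul_smul]
    have e1 : Jc * (Jc * Pc) = -Pc := by rw [← Matrix.mul_assoc, hJJ]; simp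
    have e2 : -(Pc * Jc) * Jc = Pc := by
      rw [Matrix.neg_mul, Matrix.mul_assoc, hJJ]; simp
    have e3 : -(Pc * Jc) * (Jc * Pc) = Pc * Pc := by
      rw [Matrix.neg_mul, Matrix.mul_assoc, ← Matrix.mul_assoc Jc, hJJ]; simp
    have e4 : Pc * Pc = Pc := by
      have : Pc * Pc = vecMulVec w ((w ⬝ᵥ w) • w) := by
        rw [hPw]; ext i j; simp [Matrix.mul_apply, vecMulVec_apply, Fin.sum_univ_two]; ring
      rw [this]
      have hww : (w ⬝ᵥ w) = 1 := by
        simp [dotProduct, hw, Fin.sum_univ_two]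
        exact_mod_cast congrArg (Complex.ofReal) (by linear_combination hv)
      rw [hww, one_smul, hPw]
    have h0 : Pc * (Jc * Pc) = 0 := by rw [← Matrix.mul_assoc, hPJP]
    rw [e2, h0, smul_zero, add_zero, e1, smul_neg, sub_smul]
    abel
  rw [hexp, smul_smul]
  have hsc : Complex.I * ((starRingEnd ℂ) a - a) = ((2 * L * z.im : ℝ) : ℂ) := by
    rw [ha, _root_.map_mul, Complex.conj_ofReal]
    have hs := Complex.sub_conj z
    push_cast at hs ⊢
    linear_combination (-(L : ℂ) * Complex.I) * hs - 2 * L * z.im * Complex.I_sq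
  rw [hsc]
  have hr0 : (0 : ℝ) ≤ 2 * L * z.im := by positivity
  have hss : Real.sqrt (2 * L * z.im) * Real.sqrt (2 * L * z.im) = 2 * L * z.im :=
    Real.mul_self_sqrt hr0
  suffices h : ∃ B : Matrix (Fin 2) (Fin 2) ℂ, ((2 * L * z.im : ℝ) : ℂ) • Pc = Bᴴ * B by
    obtain ⟨B, hB⟩ := h
    rw [hB]
    exact posSemidef_conjTranspose_mul_self B
  refine ⟨!![(Real.sqrt (2 * L * z.im) * v 0 : ℝ), (Real.sqrt (2 * L * z.im) * v 1 : ℝ);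
      0, 0], ?_⟩
  ext i j
  fin_cases i <;> fin_cases j
  · simp [hPc, Matrix.mul_apply, Fin.sum_univ_two, vecMulVec_apply]
    norm_cast
    push_cast
    linear_combination (-((v 0 : ℂ) * v 0)) * (by exact_mod_cast hss : ((Real.sqrt (2 * L * z.im) : ℝ) : ℂ) * ((Real.sqrt (2 * L * z.im) : ℝ) : ℂ) = 2 * (L : ℂ) * (z.im : ℂ))
  · simp [hPc, Matrix.mul_apply, Fin.sum_univ_two, vecMulVec_apply]
    norm_cast
    push_cast
    linear_combination (-((v 0 : ℂ) * v 1)) * (by exact_mod_cast hss : ((Real.sqrt (2 * L * z.im) : ℝ) : ℂ) * ((Real.sqrt (2 * L * z.im) : ℝ) : ℂ) = 2 * (L : ℂ) * (z.im : ℂ))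
  · simp [hPc, Matrix.mul_apply, Fin.sum_univ_two, vecMulVec_apply]
    norm_cast
    push_cast
    linear_combination (-((v 1 : ℂ) * v 0)) * (by exact_mod_cast hss : ((Real.sqrt (2 * L * z.im) : ℝ) : ℂ) * ((Real.sqrt (2 * L * z.im) : ℝ) : ℂ) = 2 * (L : ℂ) * (z.im : ℂ))
  · simp [hPc, Matrix.mul_apply, Fin.sum_univ_two, vecMulVec_apply]
    norm_cast
    push_cast
    linear_combination (-((v 1 : ℂ) * v 1)) * (by exact_mod_cast hss : ((Real.sqrt (2 * L * z.im) : ℝ) : ℂ) * ((Real.sqrt (2 * L * z.im) : ℝ) : ℂ) = 2 * (L : ℂ) * (z.im : ℂ))
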